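/- (Corollary 5.5: number of vertical equivalence classes at a given level.) Let n ≥ 3 and 0 ≤ i ≤ n−3. Let J_i be the subgroup of Equiv.Perm (Fin n) generated by {s_i, s_{i+1}} ∪ {s_m : m ≤ i−2 or m ≥ i+3}. The predicate 'σ⁻¹(n−1) ∈ {i, i+1, i+2}' is invariant under right multiplication of σ by elements of J_i, hence descends to the set of left cosets σJ_i. The number of left cosets of J_i in Equiv.Perm (Fin n) whose representatives σ satisfy σ⁻¹(n−1) ∈ {i, i+1, i+2} equals (n−1)!/(2·i!·(n−i−3)!) = C(n−1, i+2)·C(i+2, 2). (These cosets are precisely the G-homotopy equivalence classes of vertical primitive 6-cycles with transpositions s_i, s_{i+1}.) -/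

import Mathlib

/-- The adjacent transposition `s_j = (j, j+1)` in the symmetric group on `Fin n`,
indexed by `j : Fin (n-1)`. -/
def s {n : ℕ} (j : Fin (n - 1)) : Equiv.Perm (Fin n) :=
  Equiv.swap ⟨j.val, by have := j.isLt; omega⟩ ⟨j.val + 1, by have := j.isLt; omega⟩

/-!
`J_i` is the group of permutations preserving each of the blocks `[0, i)`, `[i, i + 3)` and
`[i + 3, n)` of `Fin n`: its generators are exactly the adjacent transpositions inside a block,
and a group generated by transpositions consists of the permutations moving every point within
its orbit. Hence `|J_i| = i! · 3! · (n - i - 3)!`. A permutation `σ` is vertical iff `σ⁻¹(n - 1)`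
lies in the middle block, which `J_i` preserves, so the vertical permutations form a union of
left cosets of `J_i`; there are `3 · (n - 1)!` of them, hence `3 · (n - 1)! / |J_i|` cosets.
-/

open Equiv (Perm swap)
open Finset Nat MulAction

theorem Subgroup.card_image_mk_mul_card {G : Type*} [Group G] (H : Subgroup G) (P : G → Prop)
    (hP : ∀ σ τ, τ ∈ H → (P (σ * τ) ↔ P σ)) :
    Nat.card {q : G ⧸ H // ∃ σ, QuotientGroup.mk σ = q ∧ P σ} * Nat.card H =
      Nat.card {σ // P σ} := by
  have hmk (σ : G) : (∃ σ', QuotientGroup.mk σ' = (σ : G ⧸ H) ∧ P σ') ↔ P σ := by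
    refine ⟨fun ⟨σ', h, hσ'⟩ => ?_, fun h => ⟨σ, rfl, h⟩⟩
    have := hP σ' _ (QuotientGroup.eq.mp h)
    rw [mul_inv_cancel_left] at this
    exact this.mpr hσ'
  rw [← Nat.card_prod, ← Nat.card_congr Equiv.prodSubtypeFstEquivSubtypeProd]
  exact Nat.card_congr
    (Subgroup.groupEquivQuotientProdSubgroup.subtypeEquiv fun σ => (hmk σ).symm).symm

theorem MulAction.card_smul_mem_eq_card_mul_card_stabilizer {G X : Type*} [Group G]
    [MulAction G X] [IsPretransitive G X] (t : X) (B : Set X) :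
    Nat.card {g : G // g • t ∈ B} = Nat.card B * Nat.card (stabilizer G t) := by
  rw [← Subgroup.card_image_mk_mul_card (stabilizer G t) (· • t ∈ B)
    fun g h hh => by rw [mul_smul, mem_stabilizer_iff.mp hh]]
  congr 1
  let e : G ⧸ stabilizer G t ≃ X := Equiv.ofBijective (ofQuotientStabilizer G t)
    ⟨injective_ofQuotientStabilizer G t, fun x => by
      obtain ⟨g, rfl⟩ := exists_smul_eq G t x
      exact ⟨g, ofQuotientStabilizer_mk G t g⟩⟩
  refine Nat.card_congr (e.subtypeEquiv fun q => ?_)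
  induction q using QuotientGroup.induction_on with | H g => ?_
  refine ⟨fun ⟨g', h, hg'⟩ => ?_, fun h => ⟨g, rfl, h⟩⟩
  rwa [← ofQuotientStabilizer_mk G t g', h] at hg'

theorem Equiv.Perm.card_inv_apply_mem {α : Type*} [Finite α] (t : α) (B : Set α) :
    Nat.card {σ : Perm α // σ⁻¹ t ∈ B} = Nat.card B * (Nat.card α - 1)! := by
  have hstab : Nat.card (stabilizer (Perm α) t) = (Nat.card α - 1)! := by
    have h := card_smul_mem_eq_card_mul_card_stabilizer (G := Perm α) t (.univ : Set α)
    simp only [Set.mem_univ, Nat.card_congr (Equiv.subtypeUnivEquiv fun _ => trivial),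
      Nat.card_perm, Nat.card_univ] at h
    have hα : Nat.card α ≠ 0 := Nat.card_ne_zero.mpr ⟨⟨t⟩, inferInstance⟩
    rw [← Nat.mul_factorial_pred hα] at h
    exact (Nat.eq_of_mul_eq_mul_left (Nat.pos_of_ne_zero hα) h).symm
  rw [← hstab, ← card_smul_mem_eq_card_mul_card_stabilizer]
  exact Nat.card_congr ((Equiv.inv _).subtypeEquiv fun σ => Iff.rfl)

theorem comp_eq_of_mem_closure {α ι : Type*} {f : α → ι} {S : Set (Perm α)}
    (hS : ∀ σ ∈ S, f ∘ σ = f) {g : Perm α} (hg : g ∈ Subgroup.closure S) : f ∘ g = f := by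
  induction hg using Subgroup.closure_induction with
  | mem σ hσ => exact hS σ hσ
  | one => rfl
  | mul a b _ _ ha hb => rw [Perm.coe_mul, ← Function.comp_assoc, ha, hb]
  | inv a _ ha =>
    conv_lhs => rw [← ha]
    rw [Function.comp_assoc, ← Perm.coe_mul, mul_inv_cancel, Perm.coe_one, Function.comp_id]

theorem mem_orbit_closure_of_adjacent_swaps {n : ℕ} {S : Set (Perm (Fin n))} {x y : Fin n}
    (hxy : x ≤ y) (hS : ∀ a b : Fin n, x ≤ a → b ≤ y → a.val + 1 = b.val → swap a b ∈ S) :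
    y ∈ orbit (Subgroup.closure S) x := by
  obtain ⟨d, hd⟩ := Nat.exists_eq_add_of_le (Fin.le_def.mp hxy)
  induction d generalizing y with
  | zero => rw [Fin.ext hd]; exact mem_orbit_self x
  | succ d ih =>
    let z : Fin n := ⟨x.val + d, by omega⟩
    have hxz : x ≤ z := Fin.le_def.mpr (Nat.le_add_right _ _)
    have hzy : z.val + 1 = y.val := by simp only [z]; omega
    have hz : z ∈ orbit (Subgroup.closure S) x :=
      ih hxz (fun a b ha hb => hS a b ha (hb.trans (Fin.le_def.mpr (by omega)))) rfl
    convert mem_orbit_of_mem_orbit ⟨swap z y, Subgroup.subset_closure (hS z y hxz le_rfl hzy)⟩ hz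
    exact (Equiv.swap_apply_left z y).symm

theorem mem_closure_adjacent_swaps_iff {n : ℕ} {ι : Type*} [PartialOrder ι] {f : Fin n → ι}
    (hf : Monotone f) {g : Perm (Fin n)} :
    g ∈ Subgroup.closure {σ | ∃ a b : Fin n, a.val + 1 = b.val ∧ f a = f b ∧ σ = swap a b} ↔
      f ∘ g = f := by
  set S := {σ | ∃ a b : Fin n, a.val + 1 = b.val ∧ f a = f b ∧ σ = swap a b}
  have hfiber {x y : Fin n} (hxy : x ≤ y) (hf' : f x = f y) : y ∈ orbit (Subgroup.closure S) x :=
    mem_orbit_closure_of_adjacent_swaps hxy fun a b ha hb hab =>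
      ⟨a, b, hab, le_antisymm (hf (Fin.le_def.mpr (by omega)))
        (((hf hb).trans_eq hf'.symm).trans (hf ha)), rfl⟩
  refine ⟨comp_eq_of_mem_closure ?_, fun hg =>
    (mem_closure_isSwap ?_).mpr ⟨Set.toFinite _, fun x => ?_⟩⟩
  · rintro σ ⟨a, b, -, hab, rfl⟩
    rw [Equiv.comp_swap_eq_update, hab, Function.update_eq_self, ← hab, Function.update_eq_self]
  · rintro σ ⟨a, b, hab, -, rfl⟩
    exact ⟨a, b, fun h => by omega, rfl⟩
  · rcases le_total x (g x) with h | h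
    · exact hfiber h (congrFun hg x).symm
    · exact mem_orbit_symm.mp (hfiber h (congrFun hg x))

theorem Fin.card_subtype_of_iff_mem_Ico {n lo hi : ℕ} {p : Fin n → Prop} [DecidablePred p]
    (hhi : hi ≤ n) (hp : ∀ x, p x ↔ lo ≤ x.val ∧ x.val < hi) :
    Fintype.card {x // p x} = hi - lo := by
  rw [Fintype.card_subtype, filter_congr fun x _ => hp x, ← card_map Fin.valEmbedding,
    ← Nat.card_Ico lo hi]
  congr 1
  ext k
  simp only [mem_map, mem_filter, mem_univ, true_and, Fin.valEmbedding_apply, mem_Ico]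
  exact ⟨fun ⟨x, hx, hxk⟩ => hxk ▸ hx, fun hk => ⟨⟨k, by omega⟩, hk, rfl⟩⟩

theorem s_eq_swap {n : ℕ} {j : Fin (n - 1)} {a b : Fin n} (ha : a.val = j.val)
    (hb : b.val = j.val + 1) : s j = swap a b := by
  cases a
  cases b
  simp only at ha hb
  subst ha hb
  rfl

def blockIndex {n : ℕ} (i : ℕ) (x : Fin n) : Fin 3 :=
  ⟨if x.val < i then 0 else if x.val < i + 3 then 1 else 2, by split_ifs <;> omega⟩

theorem generators_eq_adjacent_swaps {i n : ℕ} (hi : i + 3 ≤ n) :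
    ({s ⟨i, by omega⟩, s ⟨i + 1, by omega⟩} ∪
        {g : Perm (Fin n) | ∃ m : Fin (n - 1), (m.val + 2 ≤ i ∨ i + 3 ≤ m.val) ∧ g = s m}) =
      {σ | ∃ a b : Fin n, a.val + 1 = b.val ∧ blockIndex i a = blockIndex i b ∧ σ = swap a b} := by
  ext σ
  simp only [Set.mem_union, Set.mem_insert_iff, Set.mem_singleton_iff, Set.mem_ofPred_eq]
  constructor
  · rintro ((rfl | rfl) | ⟨m, hm, rfl⟩) <;> refine ⟨_, _, rfl, ?_, rfl⟩ <;>
      simp only [blockIndex, Fin.mk.injEq] <;> split_ifs <;> omega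
  · rintro ⟨a, b, hab, hblock, rfl⟩
    simp only [blockIndex, Fin.mk.injEq] at hblock
    have hs : ∀ j : Fin (n - 1), j.val = a.val → s j = swap a b := fun j hj =>
      s_eq_swap hj.symm (by omega)
    by_cases h0 : a.val = i
    · exact Or.inl (Or.inl (hs _ h0.symm).symm)
    by_cases h1 : a.val = i + 1
    · exact Or.inl (Or.inr (hs _ h1.symm).symm)
    · refine Or.inr ⟨⟨a.val, by omega⟩, ?_, (hs _ rfl).symm⟩
      change a.val + 2 ≤ i ∨ i + 3 ≤ a.val
      split_ifs at hblock <;> omega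

variable {n i : ℕ}

theorem monotone_blockIndex : Monotone (blockIndex (n := n) i) := by
  intro x y hxy
  simp only [blockIndex, Fin.le_def] at hxy ⊢
  split_ifs <;> omega

theorem blockIndex_eq_zero_iff (x : Fin n) : blockIndex i x = 0 ↔ 0 ≤ x.val ∧ x.val < i := by
  simp only [blockIndex, Fin.ext_iff, Fin.val_zero]
  grind

theorem blockIndex_eq_one_iff (x : Fin n) :
    blockIndex i x = 1 ↔ i ≤ x.val ∧ x.val < i + 3 := by
  simp only [blockIndex, Fin.ext_iff, Fin.val_one]
  grind

theorem blockIndex_eq_two_iff (x : Fin n) :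
    blockIndex i x = 2 ↔ i + 3 ≤ x.val ∧ x.val < n := by
  simp only [blockIndex, Fin.ext_iff, Fin.val_two]
  grind

theorem val_mem_iff_blockIndex_eq_one (x : Fin n) :
    x.val ∈ ({i, i + 1, i + 2} : Set ℕ) ↔ blockIndex i x = 1 := by
  simp only [Set.mem_insert_iff, Set.mem_singleton_iff, blockIndex_eq_one_iff]
  omega

theorem card_comp_blockIndex_eq (hi : i + 3 ≤ n) :
    Nat.card {g : Perm (Fin n) // blockIndex i ∘ g = blockIndex i} =
      i ! * 3 ! * (n - i - 3)! := by
  rw [Nat.card_eq_fintype_card, DomMulAct.stabilizer_card, Fin.prod_univ_three,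
    Fin.card_subtype_of_iff_mem_Ico (by omega) blockIndex_eq_zero_iff,
    Fin.card_subtype_of_iff_mem_Ico hi blockIndex_eq_one_iff,
    Fin.card_subtype_of_iff_mem_Ico le_rfl blockIndex_eq_two_iff]
  simp [Nat.sub_add_eq, mul_assoc]

theorem Nat.choose_mul_choose_two_mul {m j : ℕ} (h : j + 2 ≤ m) :
    m.choose (j + 2) * (j + 2).choose 2 * (2 * j ! * (m - (j + 2))!) = m ! := by
  have hj : (j + 2).choose 2 * 2 ! * j ! = (j + 2)! := by
    simpa using Nat.choose_mul_factorial_mul_factorial (show 2 ≤ j + 2 by omega)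
  rw [← Nat.choose_mul_factorial_mul_factorial h, ← hj]
  simp only [Nat.factorial_two]
  ring

/-- Corollary 5.5: let `J_i` be the subgroup generated by `s_i, s_{i+1}`
together with all adjacent transpositions disjoint from them.  The verticality predicate
`σ⁻¹(n-1) ∈ {i, i+1, i+2}` is invariant under right multiplication by elements of `J_i`,
and the number of left cosets of `J_i` whose representatives satisfy it equals
`(n-1)!/(2·i!·(n-i-3)!) = C(n-1, i+2)·C(i+2, 2)`. -/
theorem card_vertical_classes (n : ℕ) (i : ℕ) (hi : i + 3 ≤ n) :
    let J : Subgroup (Equiv.Perm (Fin n)) := Subgroup.closure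
      ({s ⟨i, by omega⟩, s ⟨i + 1, by omega⟩} ∪
        {g : Equiv.Perm (Fin n) |
          ∃ m : Fin (n - 1), (m.val + 2 ≤ i ∨ i + 3 ≤ m.val) ∧ g = s m})
    let P : Equiv.Perm (Fin n) → Prop := fun σ =>
      (σ⁻¹ ⟨n - 1, by omega⟩ : Fin n).val ∈ ({i, i + 1, i + 2} : Set ℕ)
    (∀ σ τ : Equiv.Perm (Fin n), τ ∈ J → (P (σ * τ) ↔ P σ)) ∧
    Nat.card {x : Equiv.Perm (Fin n) ⧸ J // ∃ σ, QuotientGroup.mk σ = x ∧ P σ} =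
      (n - 1).factorial / (2 * Nat.factorial i * Nat.factorial (n - i - 3)) ∧
    Nat.card {x : Equiv.Perm (Fin n) ⧸ J // ∃ σ, QuotientGroup.mk σ = x ∧ P σ} =
      Nat.choose (n - 1) (i + 2) * Nat.choose (i + 2) 2 := by
  intro J P
  set Q := Nat.card {x : Perm (Fin n) ⧸ J // ∃ σ, QuotientGroup.mk σ = x ∧ P σ}
  have hJ (g : Perm (Fin n)) : g ∈ J ↔ blockIndex i ∘ g = blockIndex i := by
    rw [show J = _ from congrArg Subgroup.closure (generators_eq_adjacent_swaps hi)]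
    exact mem_closure_adjacent_swaps_iff monotone_blockIndex
  have hP (σ : Perm (Fin n)) : P σ ↔ σ⁻¹ ⟨n - 1, by omega⟩ ∈ {x | blockIndex i x = 1} :=
    val_mem_iff_blockIndex_eq_one _
  have hinv (σ τ : Perm (Fin n)) (hτ : τ ∈ J) : P (σ * τ) ↔ P σ := by
    rw [hP, hP, mul_inv_rev, Perm.mul_apply, Set.mem_ofPred_eq, Set.mem_ofPred_eq,
      ← Function.comp_apply (f := blockIndex i), (hJ _).mp (inv_mem hτ)]
  have hcount : Q * (i ! * 3 ! * (n - i - 3)!) = 3 * (n - 1)! := by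
    rw [← card_comp_blockIndex_eq hi, ← Nat.card_congr (Equiv.subtypeEquivRight hJ),
      Subgroup.card_image_mk_mul_card J P hinv, Nat.card_congr (Equiv.subtypeEquivRight hP),
      Perm.card_inv_apply_mem, Set.coe_ofPred, Nat.card_eq_fintype_card,
      Fin.card_subtype_of_iff_mem_Ico hi blockIndex_eq_one_iff, add_tsub_cancel_left,
      Nat.card_fin]
  have key : Q * (2 * i ! * (n - i - 3)!) = (n - 1)! := by
    refine Nat.eq_of_mul_eq_mul_left (show 0 < 3 by norm_num) ?_
    rw [← hcount, Nat.factorial]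
    ring
  refine ⟨hinv, (Nat.div_eq_of_eq_mul_left (by positivity) key.symm).symm, ?_⟩
  rw [show n - i - 3 = n - 1 - (i + 2) by omega] at key
  exact Nat.eq_of_mul_eq_mul_right (by positivity)
    (key.trans (choose_mul_choose_two_mul (by omega)).symm)
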